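/- arXiv:2207.11003 — 3 statements merged into one kernel-verified Lean document; each statement's English description precedes it below -/
import Mathlib

section
/- The series α(ω) := δ/(1−φ) + κ·Σ_{i=0}^∞ φ^i f(T^{-i}ω) converges absolutely for μ-almost every ω, the resulting function α is integrable, its pushforward law under T equals its own law (strict stationarity), and it satisfies the score-recursion fixed-point equation α(Tω) = δ + φ·α(ω) + κ·f(Tω) for μ-almost every ω. -/
open MeasureTheory Filter

/-- Auxiliary: if each `g i` is integrable and the lintegrals of the norms have finite sum,
then the series is a.e. absolutely summable and the pointwise sum is integrable. -/
lemma aux_tsum_integrable {Ω : Type*} [MeasurableSpace Ω] (μ : Measure Ω)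
    (g : ℕ → Ω → ℝ) (hg : ∀ i, Integrable (g i) μ)
    (h : ∑' i, ∫⁻ ω, ‖g i ω‖₊ ∂μ ≠ ⊤) :
    (∀ᵐ ω ∂μ, Summable fun i => ‖g i ω‖) ∧ Integrable (fun ω => ∑' i, g i ω) μ := by
  have hm : ∀ i, AEMeasurable (fun ω => (‖g i ω‖₊ : ENNReal)) μ := fun i => (hg i).1.aemeasurable.nnnorm.coe_nnreal_ennreal
  have hL : ∫⁻ ω, ∑' i, (‖g i ω‖₊ : ENNReal) ∂μ ≠ ⊤ := by
    rw [lintegral_tsum hm]; exact h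
  have hae : ∀ᵐ ω ∂μ, ∑' i, (‖g i ω‖₊ : ENNReal) < ⊤ :=
    ae_lt_top' (AEMeasurable.ennreal_tsum hm) hL
  have hsum : ∀ᵐ ω ∂μ, Summable fun i => ‖g i ω‖ := by
    filter_upwards [hae] with ω hω
    have := ENNReal.tsum_coe_ne_top_iff_summable_coe.mp hω.ne
    simpa [coe_nnnorm] using this
  refine ⟨hsum, ?_, ?_⟩
  · refine aestronglyMeasurable_of_tendsto_ae
      (f := fun n ω => ∑ i ∈ Finset.range n, g i ω) atTop (fun n => ?_) ?_
    · exact Finset.aestronglyMeasurable_fun_sum (Finset.range n) fun i _ => (hg i).1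
    · filter_upwards [hsum] with ω hω
      exact hω.of_norm.hasSum.tendsto_sum_nat
  · refine lt_of_le_of_lt ?_ hL.lt_top
    refine lintegral_mono_ae ?_
    filter_upwards [hsum] with ω hω
    have hωnn : Summable fun i => ‖g i ω‖₊ := by
      rw [← NNReal.summable_coe]; simpa [coe_nnnorm] using hω
    have h1 : ‖∑' i, g i ω‖₊ ≤ ∑' i, ‖g i ω‖₊ := nnnorm_tsum_le hωnn
    calc (‖∑' i, g i ω‖₊ : ENNReal) ≤ ((∑' i, ‖g i ω‖₊ : NNReal) : ENNReal) := by
          exact_mod_cast h1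
      _ = ∑' i, (‖g i ω‖₊ : ENNReal) := ENNReal.coe_tsum hωnn

/-- The series `α(ω) = δ/(1−φ) + κ·Σ_{i=0}^∞ φ^i f(T^{-i}ω)` converges
absolutely `μ`-a.e., `α` is integrable, its law is `T`-invariant (strict stationarity), and it
satisfies the score-recursion fixed-point equation `α(Tω) = δ + φ·α(ω) + κ·f(Tω)` a.e. -/
theorem tvparx_stationary_solution
    {Ω : Type*} [MeasurableSpace Ω] (μ : Measure Ω) [IsProbabilityMeasure μ]
    (T Tinv : Ω → Ω) (hmT : Measurable T) (hmTinv : Measurable Tinv)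
    (hleft : Function.LeftInverse Tinv T) (hright : Function.RightInverse Tinv T)
    (hT : MeasurePreserving T μ μ) (hTinv : MeasurePreserving Tinv μ μ)
    (δ κ φ : ℝ) (hφ : |φ| < 1) (f : Ω → ℝ) (hf : Integrable f μ)
    (α : Ω → ℝ)
    (hα : α = fun ω => δ / (1 - φ) + κ * ∑' i : ℕ, φ ^ i * f (Tinv^[i] ω)) :
    (∀ᵐ ω ∂μ, Summable (fun i : ℕ => |φ ^ i * f (Tinv^[i] ω)|)) ∧
    Integrable α μ ∧
    Measure.map (α ∘ T) μ = Measure.map α μ ∧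
    (∀ᵐ ω ∂μ, α (T ω) = δ + φ * α ω + κ * f (T ω)) := by
  set g : ℕ → Ω → ℝ := fun i ω => φ ^ i * f (Tinv^[i] ω) with hg_def
  have hgi : ∀ i, Integrable (g i) μ := by
    intro i
    have hTi : MeasurePreserving (Tinv^[i]) μ μ := hTinv.iterate i
    have : Integrable (fun ω => f (Tinv^[i] ω)) μ :=
      Integrable.comp_aemeasurable (by rw [hTi.map_eq]; exact hf)
        (hmTinv.iterate i).aemeasurable
    exact this.const_mul _
  have hC : (∫⁻ ω, ‖f ω‖₊ ∂μ) ≠ ⊤ := hf.2.ne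
  have hlint : ∀ i, ∫⁻ ω, ‖g i ω‖₊ ∂μ = (‖φ‖₊ : ENNReal) ^ i * ∫⁻ ω, ‖f ω‖₊ ∂μ := by
    intro i
    have hTi : MeasurePreserving (Tinv^[i]) μ μ := hTinv.iterate i
    have h1 : ∫⁻ ω, (‖f (Tinv^[i] ω)‖₊ : ENNReal) ∂μ = ∫⁻ ω, ‖f ω‖₊ ∂μ := by
      have h2 := lintegral_map' (f := fun ω => (‖f ω‖₊ : ENNReal)) (g := Tinv^[i])
        (by rw [hTi.map_eq]; exact hf.1.aemeasurable.nnnorm.coe_nnreal_ennreal) (hmTinv.iterate i).aemeasurable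
      rw [hTi.map_eq] at h2
      exact h2.symm
    calc ∫⁻ ω, (‖g i ω‖₊ : ENNReal) ∂μ
        = ∫⁻ ω, (‖φ‖₊ : ENNReal) ^ i * ‖f (Tinv^[i] ω)‖₊ ∂μ := by
          apply lintegral_congr; intro ω
          simp [hg_def, nnnorm_mul, nnnorm_pow, ENNReal.coe_mul, ENNReal.coe_pow]
      _ = (‖φ‖₊ : ENNReal) ^ i * ∫⁻ ω, ‖f (Tinv^[i] ω)‖₊ ∂μ := lintegral_const_mul' _ _ (by
          exact ENNReal.pow_ne_top ENNReal.coe_ne_top)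
      _ = (‖φ‖₊ : ENNReal) ^ i * ∫⁻ ω, ‖f ω‖₊ ∂μ := by rw [h1]
  have hr : (‖φ‖₊ : ENNReal) < 1 := by
    rw [← ENNReal.coe_one, ENNReal.coe_lt_coe, ← NNReal.coe_lt_coe]
    simpa [Real.norm_eq_abs] using hφ
  have hts : ∑' i, ∫⁻ ω, ‖g i ω‖₊ ∂μ ≠ ⊤ := by
    simp_rw [hlint]
    rw [ENNReal.tsum_mul_right, ENNReal.tsum_geometric]
    exact ENNReal.mul_ne_top (ENNReal.inv_ne_top.mpr (tsub_pos_of_lt hr).ne') hC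
  obtain ⟨hsum_ae, hint_S⟩ := aux_tsum_integrable μ g hgi hts
  have habs : ∀ᵐ ω ∂μ, Summable (fun i : ℕ => |φ ^ i * f (Tinv^[i] ω)|) := by
    filter_upwards [hsum_ae] with ω hω
    simp only [hg_def, Real.norm_eq_abs] at hω
    exact hω
  have hintα : Integrable α μ := by
    rw [hα]
    exact (integrable_const _).add (hint_S.const_mul κ)
  refine ⟨habs, hintα, ?_, ?_⟩
  · have hαm : AEMeasurable α μ := hintα.aemeasurable
    have : Measure.map α (Measure.map T μ) = Measure.map (α ∘ T) μ :=
      AEMeasurable.map_map_of_aemeasurable (by rw [hT.map_eq]; exact hαm) hmT.aemeasurable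
    rw [← this, hT.map_eq]
  · filter_upwards [hsum_ae] with ω hω
    have hS : Summable (fun i => g i ω) := hω.of_norm
    have hshift : ∀ n : ℕ, φ ^ (n + 1) * f (Tinv^[n + 1] (T ω)) = φ * g n ω := by
      intro n
      rw [Function.iterate_succ_apply, hleft ω]
      simp [hg_def]; ring
    have hsum2 : Summable (fun n : ℕ => φ ^ n * f (Tinv^[n] (T ω))) := by
      rw [← summable_nat_add_iff 1]
      simp_rw [hshift]
      exact hS.mul_left φ
    have ht : ∑' n : ℕ, φ ^ n * f (Tinv^[n] (T ω)) = f (T ω) + φ * ∑' i, g i ω := by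
      rw [Summable.tsum_eq_zero_add hsum2]
      simp only [pow_zero, one_mul, Function.iterate_zero_apply]
      congr 1
      rw [← tsum_mul_left]
      exact tsum_congr hshift
    rw [hα]
    simp only
    rw [ht]
    have hφ1 : (1 : ℝ) - φ ≠ 0 := by
      have : φ < 1 := lt_of_le_of_lt (le_abs_self φ) hφ
      linarith
    field_simp
    ring
end

section
/- Let the stationary solution α be as defined, write α_n := α ∘ T^n, and let (â_n)_{n∈ℕ} be the filter started from an arbitrary measurable initialization â_0 : Ω → ℝ and updated by â_{n+1}(ω) = δ + φ·â_n(ω) + κ·f(T^{n+1}ω). Then |â_n(ω) − α_n(ω)| = |φ|^n·|â_0(ω) − α(ω)| for μ-almost every ω and every n, and consequently for every γ > 1 with γ·|φ| < 1 one has γ^n·|â_n − α_n| → 0 μ-almost surely as n → ∞ (exponentially fast almost sure convergence of the filtered parameter to its stationary counterpart). -/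
open MeasureTheory Filter Topology
open scoped ENNReal NNReal

/-- The filter `â` started from an arbitrary measurable initialization and
updated by `â_{n+1} = δ + φ·â_n + κ·f(T^{n+1}ω)` satisfies
`|â_n − α∘T^n| = |φ|^n·|â_0 − α|` μ-a.e. for every `n`, and hence converges to the stationary
solution exponentially fast almost surely: `γ^n·|â_n − α∘T^n| → 0` a.s. whenever `γ > 1` and
`γ·|φ| < 1`. -/
theorem tvparx_filter_eas_convergence
    {Ω : Type*} [MeasurableSpace Ω] (μ : Measure Ω) [IsProbabilityMeasure μ]
    (T Tinv : Ω → Ω) (hmT : Measurable T) (hmTinv : Measurable Tinv)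
    (hleft : Function.LeftInverse Tinv T) (hright : Function.RightInverse Tinv T)
    (hT : MeasurePreserving T μ μ) (hTinv : MeasurePreserving Tinv μ μ)
    (δ κ φ : ℝ) (hφ : |φ| < 1) (f : Ω → ℝ) (hf : Integrable f μ)
    (α : Ω → ℝ)
    (hα : α = fun ω => δ / (1 - φ) + κ * ∑' i : ℕ, φ ^ i * f (Tinv^[i] ω))
    (ahat : ℕ → Ω → ℝ) (h0 : Measurable (ahat 0))
    (hrec : ∀ n ω, ahat (n + 1) ω = δ + φ * ahat n ω + κ * f (T^[n + 1] ω)) :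
    (∀ᵐ ω ∂μ, ∀ n : ℕ,
      |ahat n ω - α (T^[n] ω)| = |φ| ^ n * |ahat 0 ω - α ω|) ∧
    (∀ γ : ℝ, 1 < γ → γ * |φ| < 1 →
      ∀ᵐ ω ∂μ, Tendsto (fun n : ℕ => γ ^ n * |ahat n ω - α (T^[n] ω)|) atTop (𝓝 0)) := by
  -- auxiliary : summability a.e. along all shifts
  have hcomp : ∀ i : ℕ, AEMeasurable (fun ω => f (Tinv^[i] ω)) μ := fun i =>
    hf.aemeasurable.comp_quasiMeasurePreserving (hTinv.iterate i).quasiMeasurePreserving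
  set G : Ω → ℝ≥0∞ := fun ω => ∑' i : ℕ, (‖φ ^ i * f (Tinv^[i] ω)‖₊ : ℝ≥0∞) with hG
  have hGmeas : AEMeasurable G μ := by
    apply AEMeasurable.ennreal_tsum
    intro i
    exact (aemeasurable_const.mul (hcomp i)).enorm
  have hGint : ∫⁻ ω, G ω ∂μ < ∞ := by
    rw [hG]
    simp only
    rw [lintegral_tsum (fun i => (show AEMeasurable (fun ω => (‖φ ^ i * f (Tinv^[i] ω)‖₊ : ℝ≥0∞)) μ from (aemeasurable_const.mul (hcomp i)).enorm))]
    have hterm : ∀ i : ℕ, ∫⁻ ω, (‖φ ^ i * f (Tinv^[i] ω)‖₊ : ℝ≥0∞) ∂μ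
        = (‖φ‖₊ : ℝ≥0∞) ^ i * ∫⁻ ω, (‖f ω‖₊ : ℝ≥0∞) ∂μ := by
      intro i
      have hmp := hTinv.iterate i
      have : ∫⁻ ω, (‖f (Tinv^[i] ω)‖₊ : ℝ≥0∞) ∂μ = ∫⁻ ω, (‖f ω‖₊ : ℝ≥0∞) ∂μ := by
        conv_rhs => rw [← hmp.map_eq]
        rw [lintegral_map' (by rw [hmp.map_eq]; exact hf.aemeasurable.enorm) hmp.aemeasurable]
      rw [← this, ← lintegral_const_mul' _ _ (by simp)]
      congr 1; funext ω
      simp [nnnorm_mul, nnnorm_pow, ENNReal.coe_mul, ENNReal.coe_pow, mul_comm]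
    simp only [hterm]
    rw [ENNReal.tsum_mul_right, ENNReal.tsum_geometric]
    apply ENNReal.mul_lt_top
    · have h1 : (‖φ‖₊ : ℝ≥0∞) < 1 := by
        rw [← ENNReal.coe_one, ENNReal.coe_lt_coe, ← NNReal.coe_lt_coe]
        simpa [Real.norm_eq_abs] using hφ
      exact ENNReal.inv_lt_top.2 (tsub_pos_of_lt h1)
    · exact hf.2
  have hGae : ∀ᵐ ω ∂μ, G ω < ∞ := ae_lt_top' hGmeas hGint.ne
  have hshiftae : ∀ᵐ ω ∂μ, ∀ n : ℕ, G (T^[n] ω) < ∞ := by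
    rw [ae_all_iff]
    intro n
    have hmp := hT.iterate n
    exact ae_of_ae_map hmp.aemeasurable (by rw [hmp.map_eq]; exact hGae)
  have hsummae : ∀ᵐ ω ∂μ, ∀ n : ℕ,
      Summable (fun i : ℕ => φ ^ i * f (Tinv^[i] (T^[n] ω))) := by
    filter_upwards [hshiftae] with ω hω n
    have h := hω n
    rw [hG] at h
    simp only at h
    have hnn : Summable (fun i : ℕ => ‖φ ^ i * f (Tinv^[i] (T^[n] ω))‖₊) :=
      ENNReal.tsum_coe_ne_top_iff_summable.mp h.ne
    have : Summable (fun i : ℕ => ‖φ ^ i * f (Tinv^[i] (T^[n] ω))‖) := by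
      simpa [← NNReal.summable_coe, coe_nnnorm] using hnn
    exact this.of_norm
  -- the recursion for α at summable points
  have h1φ : (1 : ℝ) - φ ≠ 0 := by
    intro h
    have : φ = 1 := by linarith
    rw [this] at hφ; norm_num at hφ
  have hrecα : ∀ ω : Ω, Summable (fun i : ℕ => φ ^ i * f (Tinv^[i] ω)) →
      Summable (fun i : ℕ => φ ^ i * f (Tinv^[i] (T ω))) →
      α (T ω) = δ + φ * α ω + κ * f (T ω) := by
    intro ω hS0 hS1
    have hsh : ∀ i : ℕ, Tinv^[i + 1] (T ω) = Tinv^[i] ω := by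
      intro i
      rw [Function.iterate_succ_apply, hleft ω]
    have hts : (∑' i : ℕ, φ ^ i * f (Tinv^[i] (T ω)))
        = f (T ω) + φ * ∑' i : ℕ, φ ^ i * f (Tinv^[i] ω) := by
      rw [Summable.tsum_eq_zero_add hS1]
      simp only [pow_zero, one_mul, Function.iterate_zero_apply]
      congr 1
      rw [← tsum_mul_left]
      congr 1; funext i
      rw [hsh i, pow_succ]
      ring
    rw [hα]
    simp only
    rw [hts]
    field_simp
    ring
  -- part 1
  have part1 : ∀ᵐ ω ∂μ, ∀ n : ℕ,
      |ahat n ω - α (T^[n] ω)| = |φ| ^ n * |ahat 0 ω - α ω| := by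
    filter_upwards [hsummae] with ω hω
    intro n
    induction n with
    | zero => simp
    | succ n ih =>
      have e : T^[n + 1] ω = T (T^[n] ω) := Function.iterate_succ_apply' T n ω
      have hα' : α (T^[n + 1] ω) = δ + φ * α (T^[n] ω) + κ * f (T^[n + 1] ω) := by
        have := hrecα (T^[n] ω) (hω n) (by rw [← e]; exact hω (n + 1))
        rw [e]; exact this
      rw [hrec n ω, hα']
      have : δ + φ * ahat n ω + κ * f (T^[n + 1] ω)
          - (δ + φ * α (T^[n] ω) + κ * f (T^[n + 1] ω))
          = φ * (ahat n ω - α (T^[n] ω)) := by ring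
      rw [this, abs_mul, ih, pow_succ]
      ring
  refine ⟨part1, fun γ hγ hγφ => ?_⟩
  filter_upwards [part1] with ω hω
  have heq : (fun n : ℕ => γ ^ n * |ahat n ω - α (T^[n] ω)|)
      = fun n : ℕ => (γ * |φ|) ^ n * |ahat 0 ω - α ω| := by
    funext n
    rw [hω n, mul_pow]
    ring
  rw [heq]
  have h0' : Tendsto (fun n : ℕ => (γ * |φ|) ^ n) atTop (𝓝 0) :=
    tendsto_pow_atTop_nhds_zero_of_lt_one (by positivity) hγφ
  simpa using h0'.mul_const _
end

section
/- Let (c_n)_{n∈ℕ} and (K_n)_{n∈ℕ} be nonnegative random variables on a probability space. Suppose there exists ρ > 1 such that ρ^n·c_n → 0 almost surely, and the K_n are identically distributed with E[log(1 + K_0)] < ∞. Then the Cesàro averages satisfy (1/T)·Σ_{n=1}^{T} K_n·c_n → 0 almost surely as T → ∞. -/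
open MeasureTheory Filter Topology ProbabilityTheory

/-- If `(c_n)` are nonnegative random variables with `ρ^n·c_n → 0` a.s. for
some `ρ > 1`, and `(K_n)` are nonnegative identically distributed random variables with
`E[log(1 + K_0)] < ∞`, then the Cesàro averages `(1/T)·Σ_{n=1}^{T} K_n·c_n → 0` a.s. -/
theorem cesaro_product_eas_convergence
    {Ω : Type*} {mΩ : MeasurableSpace Ω} (μ : Measure Ω) [IsProbabilityMeasure μ]
    (c K : ℕ → Ω → ℝ)
    (hc_nonneg : ∀ n ω, 0 ≤ c n ω) (hK_nonneg : ∀ n ω, 0 ≤ K n ω)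
    (ρ : ℝ) (hρ : 1 < ρ)
    (hc : ∀ᵐ ω ∂μ, Tendsto (fun n : ℕ => ρ ^ n * c n ω) atTop (𝓝 0))
    (hKid : ∀ n : ℕ, IdentDistrib (K n) (K 0) μ μ)
    (hKlog : Integrable (fun ω => Real.log (1 + K 0 ω)) μ) :
    ∀ᵐ ω ∂μ, Tendsto
      (fun T : ℕ => (1 / (T : ℝ)) * ∑ n ∈ Finset.Icc 1 T, K n ω * c n ω)
      atTop (𝓝 0) := by
  set δ : ℝ := Real.log ρ with hδdef
  have hδpos : 0 < δ := Real.log_pos hρ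
  -- the scaled log variable
  set X : Ω → ℝ := fun ω => Real.log (1 + K 0 ω) / δ with hXdef
  have hXnonneg : 0 ≤ X := by
    intro ω
    exact div_nonneg (Real.log_nonneg (by linarith [hK_nonneg 0 ω])) hδpos.le
  have hXint : Integrable X μ := hKlog.div_const δ
  have htsum : (∑' n : ℕ, μ {ω | X ω ∈ Set.Ioi (n : ℝ)}) < ⊤ := by
    letI : MeasureSpace Ω := ⟨μ⟩
    exact ProbabilityTheory.tsum_prob_mem_Ioi_lt_top hXint hXnonneg
  -- the bad sets
  have hu : Measurable fun x : ℝ => Real.log (1 + x) / δ :=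
    (Real.measurable_log.comp (measurable_const.add measurable_id)).div_const δ
  have hmeas : ∀ n : ℕ, μ {ω | Real.log (1 + K n ω) / δ ∈ Set.Ioi (n : ℝ)}
      = μ {ω | X ω ∈ Set.Ioi (n : ℝ)} := by
    intro n
    have := ((hKid n).comp hu).measure_mem_eq (s := Set.Ioi (n : ℝ)) measurableSet_Ioi
    exact this
  have htsum' : (∑' n : ℕ, μ {ω | Real.log (1 + K n ω) / δ ∈ Set.Ioi (n : ℝ)}) ≠ ⊤ := by
    rw [tsum_congr hmeas]
    exact htsum.ne
  have hBC : ∀ᵐ ω ∂μ, ∀ᶠ n : ℕ in atTop,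
      ω ∉ {ω | Real.log (1 + K n ω) / δ ∈ Set.Ioi (n : ℝ)} :=
    MeasureTheory.ae_eventually_notMem htsum'
  filter_upwards [hc, hBC] with ω hcω hBω
  -- pointwise: K n ω * c n ω → 0
  have hprod : Tendsto (fun n : ℕ => K n ω * c n ω) atTop (𝓝 0) := by
    have hbound : ∀ᶠ n : ℕ in atTop, K n ω * c n ω ≤ ρ ^ n * c n ω := by
      filter_upwards [hBω] with n hn
      simp only [Set.mem_setOf_eq, Set.mem_Ioi, not_lt] at hn
      have hlog : Real.log (1 + K n ω) ≤ (n : ℝ) * δ := by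
        rw [div_le_iff₀ hδpos] at hn
        linarith
      have h1K : (0:ℝ) < 1 + K n ω := by linarith [hK_nonneg n ω]
      have : 1 + K n ω ≤ Real.exp ((n : ℝ) * δ) := by
        calc 1 + K n ω = Real.exp (Real.log (1 + K n ω)) := (Real.exp_log h1K).symm
        _ ≤ Real.exp ((n : ℝ) * δ) := Real.exp_le_exp.2 hlog
      have hexp : Real.exp ((n : ℝ) * δ) = ρ ^ n := by
        rw [Real.exp_nat_mul, hδdef, Real.exp_log (by linarith)]
      have hK : K n ω ≤ ρ ^ n := by
        rw [← hexp]; linarith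
      exact mul_le_mul_of_nonneg_right hK (hc_nonneg n ω)
    have hlow : ∀ᶠ n : ℕ in atTop, 0 ≤ K n ω * c n ω :=
      Eventually.of_forall fun n => mul_nonneg (hK_nonneg n ω) (hc_nonneg n ω)
    exact squeeze_zero' hlow hbound hcω
  -- shift and apply Cesàro
  have hshift : Tendsto (fun n : ℕ => K (1 + n) ω * c (1 + n) ω) atTop (𝓝 0) := by
    have := hprod.comp (tendsto_add_atTop_nat 1)
    simpa [Function.comp_def, add_comm] using this
  have hces := hshift.cesaro
  have heq : ∀ T : ℕ, (1 / (T : ℝ)) * ∑ n ∈ Finset.Icc 1 T, K n ω * c n ω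
      = (T : ℝ)⁻¹ * ∑ i ∈ Finset.range T, K (1 + i) ω * c (1 + i) ω := by
    intro T
    rw [one_div, ← Finset.Ico_add_one_right_eq_Icc, Finset.sum_Ico_eq_sum_range]
    simp
  exact Tendsto.congr (fun T => (heq T).symm) hces
end
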